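/- arXiv:2507.11018 — 2 statements merged into one kernel-verified Lean document; each statement's English description precedes it below -/
import Mathlib

section
/- Program equivalence: a contract (s,p) is optimal if and only if p = p*(s), s satisfies (BE), and s_1 is maximal subject to the constraints, i.e. for every nondecreasing sequence s′ : ℕ → [0,1] with s′_0 = 0 satisfying (BE), one has s′_1 ≤ s_1. -/
open Set Filter

/-- Principal's continuation value `Π_t(s,p) = Σ_{τ=t}^∞ δ^{τ−t}(π(s_τ) − p_τ)`. -/
noncomputable def PiVal (δ : ℝ) (π : ℝ → ℝ) (s p : ℕ → ℝ) (t : ℕ) : ℝ :=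
  ∑' k : ℕ, δ ^ k * (π (s (t + k)) - p (t + k))

/-- Expert's continuation value `W_t(s,p) = Σ_{τ=t}^∞ δ^{τ−t}(w(s_τ) + p_τ)`. -/
noncomputable def WVal (δ : ℝ) (w : ℝ → ℝ) (s p : ℕ → ℝ) (t : ℕ) : ℝ :=
  ∑' k : ℕ, δ ^ k * (w (s (t + k)) + p (t + k))

/-- A contract: `s` takes values in `[0,1]`, `s 0 = 0`, and `t ↦ δ^t·p_t` is summable. -/
def IsContract (δ : ℝ) (s p : ℕ → ℝ) : Prop :=
  (∀ t, s t ∈ Set.Icc (0 : ℝ) 1) ∧ s 0 = 0 ∧ Summable fun t => δ ^ t * p t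

/-- Implementability: feasibility (monotone `s`, nonnegative `p`) plus (P-IC) and (E-IC). -/
def Implementable (δ : ℝ) (π w : ℝ → ℝ) (s p : ℕ → ℝ) : Prop :=
  IsContract δ s p ∧ Monotone s ∧ (∀ t, 0 ≤ p t) ∧
  (∀ t, π (s t) / (1 - δ) ≤ PiVal δ π s p t) ∧
  (∀ t, w (s t) / (1 - δ) ≤ WVal δ w s p (t + 1))

/-- An optimal contract maximizes the principal's time-0 profit among implementable contracts. -/
def Optimal (δ : ℝ) (π w : ℝ → ℝ) (s p : ℕ → ℝ) : Prop :=
  Implementable δ π w s p ∧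
  ∀ s' p' : ℕ → ℝ, Implementable δ π w s' p' → PiVal δ π s' p' 0 ≤ PiVal δ π s p 0

/-- The break-even condition (BE): `δ·(π(s_{t+1}) − π(s_t)) = w(s_{t−1}) − w(s_t)` for every `t ≥ 1`. -/
def BE (δ : ℝ) (π w : ℝ → ℝ) (s : ℕ → ℝ) : Prop :=
  ∀ t : ℕ, 1 ≤ t → δ * (π (s (t + 1)) - π (s t)) = w (s (t - 1)) - w (s t)

/-- The frontloaded payment scheme `p*(s)`: `p*_0 = 0`, `p*_t = (w(s_{t−1}) − w(s_t))/(1−δ)` for `t ≥ 1`. -/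
noncomputable def payStar (δ : ℝ) (w : ℝ → ℝ) (s : ℕ → ℝ) (t : ℕ) : ℝ :=
  if t = 0 then 0 else (w (s (t - 1)) - w (s t)) / (1 - δ)

/-!
Since `Π_t + W_t = S_t`, the discounted total surplus, (P-IC) at `t + 1` plus (E-IC) at `t` give
the constraint `(π(s_{t+1}) + w(s_t))/(1−δ) ≤ S_{t+1}` (`0 ≤ slack`) on `s` alone, and (E-IC) with
`p_0 ≥ 0` gives `Π_0 ≤ S_0 − w(0)/(1−δ)`. So every profit is bounded by the relaxed program
"maximize `S_0` under these constraints", and the frontloaded payments `p*(s)` attain the bound.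
The relaxed program has a maximizer by compactness of `[0,1]^ℕ`, and at a maximizer every
constraint binds: otherwise some (BE) residual is positive, and raising `s_{m+1}` slightly keeps
the constraints while increasing `S_0`, as `π + w` is increasing. Binding constraints amount to
(BE), and under (BE) the profit of `(s, p*(s))` is `π(0) + δ π(s_1)/(1−δ)`, increasing in `s_1`.
-/

open Topology

section Discounted

variable {δ C : ℝ} {f : ℕ → ℝ}

lemma norm_pow_mul_le (h0 : 0 ≤ δ) {a : ℝ} (ha : |a| ≤ C) (k : ℕ) :
    ‖δ ^ k * a‖ ≤ δ ^ k * C := by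
  rw [Real.norm_eq_abs, abs_mul, abs_pow, abs_of_nonneg h0]
  exact mul_le_mul_of_nonneg_left ha (pow_nonneg h0 k)

lemma summable_pow_mul_of_abs_le (h0 : 0 ≤ δ) (h1 : δ < 1) (hf : ∀ n, |f n| ≤ C) :
    Summable fun k => δ ^ k * f k :=
  .of_norm_bounded ((summable_geometric_of_lt_one h0 h1).mul_right C)
    fun k => norm_pow_mul_le h0 (hf k) k

lemma abs_tsum_pow_mul_le (h0 : 0 ≤ δ) (h1 : δ < 1) (hf : ∀ n, |f n| ≤ C) :
    |∑' k, δ ^ k * f k| ≤ C / (1 - δ) := by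
  simpa [div_eq_inv_mul] using tsum_of_norm_bounded
    ((hasSum_geometric_of_lt_one h0 h1).mul_right C) fun k => norm_pow_mul_le h0 (hf k) k

lemma Summable.pow_mul_comp_add (hδ : δ ≠ 0) (hf : Summable fun k => δ ^ k * f k) (t : ℕ) :
    Summable fun k => δ ^ k * f (t + k) :=
  (((summable_nat_add_iff t).2 hf).mul_left (δ ^ t)⁻¹).congr fun k => by
    rw [pow_add, add_comm k t]
    field_simp

lemma tsum_pow_mul_eq_add {t : ℕ} (hf : Summable fun k => δ ^ k * f (t + k)) :
    ∑' k, δ ^ k * f (t + k) = f t + δ * ∑' k, δ ^ k * f (t + 1 + k) := by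
  rw [hf.tsum_eq_zero_add, ← tsum_mul_left]
  simp only [pow_zero, one_mul, add_zero]
  congr 1
  exact tsum_congr fun k => by ring_nf

lemma nonpos_of_le_mul_succ (h0 : 0 ≤ δ) (h1 : δ < 1) (hC : ∀ n, f n ≤ C)
    (hf : ∀ n, f n ≤ δ * f (n + 1)) (n : ℕ) : f n ≤ 0 := by
  have key : ∀ k n, f n ≤ δ ^ k * C := by
    intro k
    induction k with
    | zero => simpa using hC
    | succ k ih =>
      intro n
      calc f n ≤ δ * f (n + 1) := hf n
        _ ≤ δ * (δ ^ k * C) := mul_le_mul_of_nonneg_left (ih _) h0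
        _ = δ ^ (k + 1) * C := by ring
  have hlim : Tendsto (fun k => δ ^ k * C) atTop (𝓝 0) := by
    simpa using (tendsto_pow_atTop_nhds_zero_of_lt_one h0 h1).mul_const C
  exact ge_of_tendsto' hlim fun k => key k n

lemma eq_zero_of_eq_mul_succ (h0 : 0 ≤ δ) (h1 : δ < 1) (hC : ∀ n, |f n| ≤ C)
    (hf : ∀ n, f n = δ * f (n + 1)) (n : ℕ) : f n = 0 := by
  have hneg := nonpos_of_le_mul_succ (f := fun n => -f n) h0 h1
    (fun n => (neg_le_abs _).trans (hC n)) (fun n => by rw [hf n, mul_neg]) n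
  exact le_antisymm (nonpos_of_le_mul_succ h0 h1 (fun n => (le_abs_self _).trans (hC n))
    (fun n => (hf n).le) n) (by simpa using hneg)

end Discounted

lemma tsum_sub_tsum_of_eq_off {ι G : Type*} [AddCommGroup G] [TopologicalSpace G]
    [IsTopologicalAddGroup G] [T2Space G] {f g : ι → G} (hf : Summable f) (hg : Summable g)
    {i : ι} (h : ∀ k, k ≠ i → f k = g k) : ∑' k, f k - ∑' k, g k = f i - g i := by
  rw [← hf.tsum_sub hg]
  exact tsum_eq_single i fun k hk => sub_eq_zero.2 (h k hk)

lemma exists_mem_Ioc_lt_of_continuousWithinAt {g : ℝ → ℝ} {a b ε : ℝ} (hab : a < b)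
    (hg : ContinuousWithinAt g (Ioc a b) a) (hε : g a < ε) : ∃ x ∈ Ioc a b, g x < ε :=
  have := left_nhdsWithin_Ioc_neBot hab
  ((hg.eventually (gt_mem_nhds hε)).and self_mem_nhdsWithin).exists.imp fun _ h => ⟨h.2, h.1⟩

lemma Monotone.update_succ {α : Type*} [Preorder α] {u : ℕ → α} (hu : Monotone u) {m : ℕ}
    {x : α} (hl : u m ≤ x) (hr : x ≤ u (m + 2)) : Monotone (Function.update u (m + 1) x) := by
  refine monotone_nat_of_le_succ fun n => ?_
  simp only [Function.update_apply]
  split_ifs with h₁ h₂ h₂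
  · omega
  · subst h₁
    exact hr
  · obtain rfl : n = m := by omega
    exact hl
  · exact hu n.le_succ

noncomputable def surplus (δ : ℝ) (π w : ℝ → ℝ) (u : ℕ → ℝ) (t : ℕ) : ℝ :=
  ∑' k : ℕ, δ ^ k * (π (u (t + k)) + w (u (t + k)))

noncomputable def slack (δ : ℝ) (π w : ℝ → ℝ) (u : ℕ → ℝ) (t : ℕ) : ℝ :=
  surplus δ π w u (t + 1) - (π (u (t + 1)) + w (u t)) / (1 - δ)

def RelaxedFeasible (δ : ℝ) (π w : ℝ → ℝ) (u : ℕ → ℝ) : Prop :=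
  (∀ t, u t ∈ Icc (0 : ℝ) 1) ∧ u 0 = 0 ∧ Monotone u ∧ ∀ t, 0 ≤ slack δ π w u t

section Model

variable {δ : ℝ} {π w : ℝ → ℝ} {u p : ℕ → ℝ}

lemma summable_pow_mul_comp (h0 : 0 ≤ δ) (h1 : δ < 1) {f : ℝ → ℝ}
    (hf : ContinuousOn f (Icc 0 1)) (hu : ∀ n, u n ∈ Icc (0 : ℝ) 1) (t : ℕ) :
    Summable fun k => δ ^ k * f (u (t + k)) := by
  obtain ⟨C, hC⟩ := isCompact_Icc.exists_bound_of_continuousOn hf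
  exact summable_pow_mul_of_abs_le h0 h1 fun n => hC _ (hu _)

lemma surplus_eq_add (h0 : 0 ≤ δ) (h1 : δ < 1) (hπc : ContinuousOn π (Icc 0 1))
    (hwc : ContinuousOn w (Icc 0 1)) (hu : ∀ n, u n ∈ Icc (0 : ℝ) 1) (t : ℕ) :
    surplus δ π w u t = π (u t) + w (u t) + δ * surplus δ π w u (t + 1) :=
  tsum_pow_mul_eq_add (f := fun n => π (u n) + w (u n))
    (summable_pow_mul_comp h0 h1 (hπc.add hwc) hu t)

lemma exists_abs_slack_le (h0 : 0 ≤ δ) (h1 : δ < 1) (hπc : ContinuousOn π (Icc 0 1))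
    (hwc : ContinuousOn w (Icc 0 1)) (hu : ∀ n, u n ∈ Icc (0 : ℝ) 1) :
    ∃ C, ∀ t, |slack δ π w u t| ≤ C := by
  obtain ⟨A, hA⟩ := isCompact_Icc.exists_bound_of_continuousOn hπc
  obtain ⟨B, hB⟩ := isCompact_Icc.exists_bound_of_continuousOn hwc
  have hAB : ∀ m n, |π (u m) + w (u n)| ≤ A + B := fun m n =>
    (abs_add_le _ _).trans (add_le_add (hA _ (hu m)) (hB _ (hu n)))
  refine ⟨(A + B) / (1 - δ) + (A + B) / (1 - δ), fun t => ?_⟩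
  have hS := abs_tsum_pow_mul_le h0 h1 (f := fun k => π (u (t + 1 + k)) + w (u (t + 1 + k)))
    fun k => hAB _ _
  have hq : |(π (u (t + 1)) + w (u t)) / (1 - δ)| ≤ (A + B) / (1 - δ) := by
    rw [abs_div, abs_of_pos (sub_pos.2 h1)]
    exact div_le_div_of_nonneg_right (hAB _ _) (sub_pos.2 h1).le
  exact (abs_sub _ _).trans (add_le_add hS hq)

lemma BE_iff : BE δ π w u ↔
    ∀ t, δ * (π (u (t + 2)) - π (u (t + 1))) = w (u t) - w (u (t + 1)) := by
  refine ⟨fun h t => by simpa using h (t + 1) (by omega), fun h t ht => ?_⟩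
  obtain ⟨t, rfl⟩ := Nat.exists_eq_add_of_le' ht
  simpa using h t

lemma slack_sub_mul_slack_succ (h0 : 0 ≤ δ) (h1 : δ < 1) (hπc : ContinuousOn π (Icc 0 1))
    (hwc : ContinuousOn w (Icc 0 1)) (hu : ∀ n, u n ∈ Icc (0 : ℝ) 1) (t : ℕ) :
    slack δ π w u t - δ * slack δ π w u (t + 1) =
      (δ * (π (u (t + 2)) - π (u (t + 1))) - (w (u t) - w (u (t + 1)))) / (1 - δ) := by
  have hD : 1 - δ ≠ 0 := (sub_pos.2 h1).ne'
  simp only [slack]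
  rw [surplus_eq_add h0 h1 hπc hwc hu (t + 1)]
  field_simp
  ring

lemma slack_eq_zero_iff_BE (h0 : 0 ≤ δ) (h1 : δ < 1) (hπc : ContinuousOn π (Icc 0 1))
    (hwc : ContinuousOn w (Icc 0 1)) (hu : ∀ n, u n ∈ Icc (0 : ℝ) 1) :
    (∀ t, slack δ π w u t = 0) ↔ BE δ π w u := by
  rw [BE_iff]
  constructor
  · intro h t
    have := slack_sub_mul_slack_succ h0 h1 hπc hwc hu t
    rw [h, h, mul_zero, sub_zero, eq_comm, div_eq_zero_iff] at this
    rcases this with h' | h'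
    · linarith
    · exact absurd h' (sub_pos.2 h1).ne'
  · intro h
    obtain ⟨C, hC⟩ := exists_abs_slack_le h0 h1 hπc hwc hu
    refine eq_zero_of_eq_mul_succ h0 h1 hC fun t => ?_
    have := slack_sub_mul_slack_succ h0 h1 hπc hwc hu t
    rw [h t, sub_self, zero_div] at this
    linarith

lemma monotone_of_BE (h0 : 0 < δ) (hπm : StrictMonoOn π (Icc 0 1))
    (hwa : StrictAntiOn w (Icc 0 1)) (hu : ∀ n, u n ∈ Icc (0 : ℝ) 1) (hu0 : u 0 = 0)
    (h : BE δ π w u) : Monotone u := by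
  rw [BE_iff] at h
  refine monotone_nat_of_le_succ fun t => ?_
  induction t with
  | zero => rw [hu0]; exact (hu 1).1
  | succ t ih =>
    by_contra! hlt
    have hπ : π (u (t + 2)) < π (u (t + 1)) := hπm (hu _) (hu _) hlt
    have hw : w (u (t + 1)) ≤ w (u t) := hwa.antitoneOn (hu _) (hu _) ih
    nlinarith [h t]

lemma PiVal_add_WVal (h0 : 0 < δ) (h1 : δ < 1) (hπc : ContinuousOn π (Icc 0 1))
    (hwc : ContinuousOn w (Icc 0 1)) (hu : ∀ n, u n ∈ Icc (0 : ℝ) 1)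
    (hp : Summable fun t => δ ^ t * p t) (t : ℕ) :
    PiVal δ π u p t + WVal δ w u p t = surplus δ π w u t := by
  have hp' := hp.pow_mul_comp_add h0.ne' t
  have hπ := summable_pow_mul_comp h0.le h1 hπc hu t
  have hw := summable_pow_mul_comp h0.le h1 hwc hu t
  rw [PiVal, WVal, ← Summable.tsum_add ((hπ.sub hp').congr fun _ => (mul_sub _ _ _).symm)
    ((hw.add hp').congr fun _ => (mul_add _ _ _).symm)]
  exact tsum_congr fun k => by ring

lemma WVal_eq_add (h0 : 0 < δ) (h1 : δ < 1) (hwc : ContinuousOn w (Icc 0 1))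
    (hu : ∀ n, u n ∈ Icc (0 : ℝ) 1) (hp : Summable fun t => δ ^ t * p t) (t : ℕ) :
    WVal δ w u p t = w (u t) + p t + δ * WVal δ w u p (t + 1) :=
  tsum_pow_mul_eq_add (f := fun n => w (u n) + p n)
    (((summable_pow_mul_comp h0.le h1 hwc hu t).add (hp.pow_mul_comp_add h0.ne' t)).congr
      fun _ => (mul_add _ _ _).symm)

lemma eq_of_WVal_eq {q : ℕ → ℝ} (h0 : 0 < δ) (h1 : δ < 1) (hwc : ContinuousOn w (Icc 0 1))
    (hu : ∀ n, u n ∈ Icc (0 : ℝ) 1) (hp : Summable fun t => δ ^ t * p t)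
    (hq : Summable fun t => δ ^ t * q t) (h : ∀ t, WVal δ w u p t = WVal δ w u q t) :
    p = q := by
  funext t
  have hpt := WVal_eq_add h0 h1 hwc hu hp t
  rw [h, h, WVal_eq_add h0 h1 hwc hu hq t] at hpt
  linarith

lemma payStar_succ (t : ℕ) : payStar δ w u (t + 1) = (w (u t) - w (u (t + 1))) / (1 - δ) := by
  simp [payStar]

lemma summable_payStar (h0 : 0 ≤ δ) (h1 : δ < 1) (hwc : ContinuousOn w (Icc 0 1))
    (hu : ∀ n, u n ∈ Icc (0 : ℝ) 1) : Summable fun t => δ ^ t * payStar δ w u t := by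
  obtain ⟨B, hB⟩ := isCompact_Icc.exists_bound_of_continuousOn hwc
  have hD := sub_pos.2 h1
  refine summable_pow_mul_of_abs_le h0 h1 (C := (B + B) / (1 - δ)) fun t => ?_
  cases t with
  | zero =>
    have : 0 ≤ B := (abs_nonneg _).trans (hB _ (hu 0))
    simp only [payStar, if_pos, abs_zero]
    positivity
  | succ t =>
    rw [payStar_succ, abs_div, abs_of_pos hD]
    exact div_le_div_of_nonneg_right
      ((abs_sub _ _).trans (add_le_add (hB _ (hu _)) (hB _ (hu _)))) hD.le

lemma WVal_payStar_succ (h0 : 0 < δ) (h1 : δ < 1) (hwc : ContinuousOn w (Icc 0 1))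
    (hu : ∀ n, u n ∈ Icc (0 : ℝ) 1) (t : ℕ) :
    WVal δ w u (payStar δ w u) (t + 1) = w (u t) / (1 - δ) := by
  have hD : 1 - δ ≠ 0 := (sub_pos.2 h1).ne'
  have hA := summable_pow_mul_comp h0.le h1 hwc hu t
  have hB := summable_pow_mul_comp h0.le h1 hwc hu (t + 1)
  have hsummand : ∀ k, δ ^ k * (w (u (t + 1 + k)) + payStar δ w u (t + 1 + k)) =
      (δ ^ k * w (u (t + k)) - δ * (δ ^ k * w (u (t + 1 + k)))) / (1 - δ) := by
    intro k
    rw [show t + 1 + k = t + k + 1 by ring, payStar_succ]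
    field_simp
    ring
  rw [WVal, tsum_congr hsummand, tsum_div_const, hA.tsum_sub (hB.mul_left δ), tsum_mul_left,
    tsum_pow_mul_eq_add (f := fun n => w (u n)) hA]
  field_simp
  ring

lemma WVal_payStar_zero (h0 : 0 < δ) (h1 : δ < 1) (hwc : ContinuousOn w (Icc 0 1))
    (hu : ∀ n, u n ∈ Icc (0 : ℝ) 1) : WVal δ w u (payStar δ w u) 0 = w (u 0) / (1 - δ) := by
  have hD : 1 - δ ≠ 0 := (sub_pos.2 h1).ne'
  rw [WVal_eq_add h0 h1 hwc hu (summable_payStar h0.le h1 hwc hu) 0,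
    WVal_payStar_succ h0 h1 hwc hu 0]
  simp only [payStar, if_pos, add_zero]
  field_simp
  ring

lemma PiVal_payStar_zero (h0 : 0 < δ) (h1 : δ < 1) (hπc : ContinuousOn π (Icc 0 1))
    (hwc : ContinuousOn w (Icc 0 1)) (hu : ∀ n, u n ∈ Icc (0 : ℝ) 1) :
    PiVal δ π u (payStar δ w u) 0 = surplus δ π w u 0 - w (u 0) / (1 - δ) := by
  have := PiVal_add_WVal h0 h1 hπc hwc hu (summable_payStar h0.le h1 hwc hu) 0
  rw [WVal_payStar_zero h0 h1 hwc hu] at this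
  linarith

lemma PiVal_payStar_succ (h0 : 0 < δ) (h1 : δ < 1) (hπc : ContinuousOn π (Icc 0 1))
    (hwc : ContinuousOn w (Icc 0 1)) (hu : ∀ n, u n ∈ Icc (0 : ℝ) 1) (t : ℕ) :
    PiVal δ π u (payStar δ w u) (t + 1) = surplus δ π w u (t + 1) - w (u t) / (1 - δ) := by
  have := PiVal_add_WVal h0 h1 hπc hwc hu (summable_payStar h0.le h1 hwc hu) (t + 1)
  rw [WVal_payStar_succ h0 h1 hwc hu t] at this
  linarith

lemma PiVal_payStar_of_BE (h0 : 0 < δ) (h1 : δ < 1) (hπc : ContinuousOn π (Icc 0 1))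
    (hwc : ContinuousOn w (Icc 0 1)) (hu : ∀ n, u n ∈ Icc (0 : ℝ) 1) (h : BE δ π w u) :
    PiVal δ π u (payStar δ w u) 0 = π (u 0) + δ * π (u 1) / (1 - δ) := by
  have hD : 1 - δ ≠ 0 := (sub_pos.2 h1).ne'
  have hS1 := (slack_eq_zero_iff_BE h0.le h1 hπc hwc hu).2 h 0
  rw [slack, sub_eq_zero] at hS1
  rw [PiVal_payStar_zero h0 h1 hπc hwc hu, surplus_eq_add h0.le h1 hπc hwc hu 0, hS1]
  field_simp
  ring

lemma PiVal_payStar_le_iff {v : ℕ → ℝ} (h0 : 0 < δ) (h1 : δ < 1)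
    (hπc : ContinuousOn π (Icc 0 1)) (hwc : ContinuousOn w (Icc 0 1))
    (hπm : StrictMonoOn π (Icc 0 1)) (hu : ∀ n, u n ∈ Icc (0 : ℝ) 1)
    (hv : ∀ n, v n ∈ Icc (0 : ℝ) 1) (hu_BE : BE δ π w u) (hv_BE : BE δ π w v)
    (huv : u 0 = v 0) :
    PiVal δ π u (payStar δ w u) 0 ≤ PiVal δ π v (payStar δ w v) 0 ↔ u 1 ≤ v 1 := by
  rw [PiVal_payStar_of_BE h0 h1 hπc hwc hu hu_BE, PiVal_payStar_of_BE h0 h1 hπc hwc hv hv_BE,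
    huv, add_le_add_iff_left, div_le_div_iff_of_pos_right (sub_pos.2 h1),
    mul_le_mul_iff_right₀ h0, hπm.le_iff_le (hu 1) (hv 1)]

lemma Implementable.relaxedFeasible (h0 : 0 < δ) (h1 : δ < 1) (hπc : ContinuousOn π (Icc 0 1))
    (hwc : ContinuousOn w (Icc 0 1)) (h : Implementable δ π w u p) :
    RelaxedFeasible δ π w u := by
  obtain ⟨⟨hu, hu0, hp⟩, hmono, -, hP, hE⟩ := h
  refine ⟨hu, hu0, hmono, fun t => ?_⟩
  have := PiVal_add_WVal h0 h1 hπc hwc hu hp (t + 1)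
  have := hP (t + 1)
  have := hE t
  rw [slack, add_div]
  linarith

lemma Implementable.PiVal_le (h0 : 0 < δ) (h1 : δ < 1) (hπc : ContinuousOn π (Icc 0 1))
    (hwc : ContinuousOn w (Icc 0 1)) (h : Implementable δ π w u p) :
    PiVal δ π u p 0 ≤ surplus δ π w u 0 - w (u 0) / (1 - δ) := by
  obtain ⟨⟨hu, -, hp⟩, -, hpos, -, hE⟩ := h
  have hD : 1 - δ ≠ 0 := (sub_pos.2 h1).ne'
  have hW := WVal_eq_add h0 h1 hwc hu hp 0
  have := PiVal_add_WVal h0 h1 hπc hwc hu hp 0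
  have := mul_le_mul_of_nonneg_left (hE 0) h0.le
  have : w (u 0) / (1 - δ) = w (u 0) + δ * (w (u 0) / (1 - δ)) := by
    field_simp
    ring
  linarith [hpos 0]

lemma RelaxedFeasible.implementable_payStar (h0 : 0 < δ) (h1 : δ < 1)
    (hπc : ContinuousOn π (Icc 0 1)) (hwc : ContinuousOn w (Icc 0 1))
    (hπm : StrictMonoOn π (Icc 0 1)) (hwa : StrictAntiOn w (Icc 0 1))
    (h : RelaxedFeasible δ π w u) : Implementable δ π w u (payStar δ w u) := by
  obtain ⟨hu, hu0, hmono, hslack⟩ := h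
  have hD := sub_pos.2 h1
  refine ⟨⟨hu, hu0, summable_payStar h0.le h1 hwc hu⟩, hmono, fun t => ?_, fun t => ?_,
    fun t => (WVal_payStar_succ h0 h1 hwc hu t).ge⟩
  · cases t with
    | zero => simp [payStar]
    | succ t =>
      rw [payStar_succ]
      exact div_nonneg (sub_nonneg.2 (hwa.antitoneOn (hu _) (hu _) (hmono t.le_succ))) hD.le
  · cases t with
    | zero =>
      have hπ01 : π (u 0) ≤ π (u 1) := hπm.monotoneOn (hu 0) (hu 1) (hmono zero_le_one)
      have key : π (u 0) + w (u 0) + δ * surplus δ π w u 1 - w (u 0) / (1 - δ) -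
          π (u 0) / (1 - δ) = δ * slack δ π w u 0 + δ * (π (u 1) - π (u 0)) / (1 - δ) := by
        rw [slack]
        field_simp
        ring
      rw [PiVal_payStar_zero h0 h1 hπc hwc hu, surplus_eq_add h0.le h1 hπc hwc hu 0]
      have := mul_nonneg h0.le (hslack 0)
      have := div_nonneg (mul_nonneg h0.le (sub_nonneg.2 hπ01)) hD.le
      linarith
    | succ t =>
      rw [PiVal_payStar_succ h0 h1 hπc hwc hu t]
      have := hslack t
      rw [slack, add_div] at this
      linarith

lemma RelaxedFeasible.of_BE (h0 : 0 < δ) (h1 : δ < 1) (hπc : ContinuousOn π (Icc 0 1))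
    (hwc : ContinuousOn w (Icc 0 1)) (hπm : StrictMonoOn π (Icc 0 1))
    (hwa : StrictAntiOn w (Icc 0 1)) (hu : ∀ n, u n ∈ Icc (0 : ℝ) 1) (hu0 : u 0 = 0)
    (h : BE δ π w u) : RelaxedFeasible δ π w u :=
  ⟨hu, hu0, monotone_of_BE h0 hπm hwa hu hu0 h,
    fun t => ((slack_eq_zero_iff_BE h0.le h1 hπc hwc hu).2 h t).ge⟩

lemma eq_payStar_of_slack_eq_zero (h0 : 0 < δ) (h1 : δ < 1) (hπc : ContinuousOn π (Icc 0 1))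
    (hwc : ContinuousOn w (Icc 0 1)) (h : Implementable δ π w u p)
    (hslack : ∀ t, slack δ π w u t = 0)
    (hPi : PiVal δ π u p 0 = surplus δ π w u 0 - w (u 0) / (1 - δ)) : p = payStar δ w u := by
  obtain ⟨⟨hu, -, hp⟩, -, -, hP, hE⟩ := h
  refine eq_of_WVal_eq h0 h1 hwc hu hp (summable_payStar h0.le h1 hwc hu) fun t => ?_
  cases t with
  | zero =>
    rw [WVal_payStar_zero h0 h1 hwc hu]
    linarith [PiVal_add_WVal h0 h1 hπc hwc hu hp 0]
  | succ t =>
    rw [WVal_payStar_succ h0 h1 hwc hu]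
    have := PiVal_add_WVal h0 h1 hπc hwc hu hp (t + 1)
    have := hslack t
    rw [slack, add_div] at this
    linarith [hP (t + 1), hE t]

end Model

section Existence

variable {δ : ℝ} {π w : ℝ → ℝ}

lemma continuousOn_comp_apply {f : ℝ → ℝ} (hf : ContinuousOn f (Icc 0 1)) (n : ℕ) :
    ContinuousOn (fun u : ℕ → ℝ => f (u n)) (univ.pi fun _ => Icc 0 1) :=
  hf.comp (continuous_apply n).continuousOn fun _ hu => hu n trivial

lemma continuousOn_surplus (h0 : 0 ≤ δ) (h1 : δ < 1) (hπc : ContinuousOn π (Icc 0 1))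
    (hwc : ContinuousOn w (Icc 0 1)) (t : ℕ) :
    ContinuousOn (fun u => surplus δ π w u t) (univ.pi fun _ => Icc 0 1) := by
  obtain ⟨C, hC⟩ := isCompact_Icc.exists_bound_of_continuousOn (hπc.add hwc)
  exact continuousOn_tsum
    (fun k => continuousOn_const.mul (continuousOn_comp_apply (hπc.add hwc) (t + k)))
    ((summable_geometric_of_lt_one h0 h1).mul_right C)
    fun k _ hu => norm_pow_mul_le h0 (hC _ (hu _ trivial)) k

lemma isCompact_relaxedFeasible (h0 : 0 ≤ δ) (h1 : δ < 1) (hπc : ContinuousOn π (Icc 0 1))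
    (hwc : ContinuousOn w (Icc 0 1)) : IsCompact {u | RelaxedFeasible δ π w u} := by
  set K : Set (ℕ → ℝ) := univ.pi fun _ => Icc 0 1
  have hslack : ∀ t, IsClosed {u ∈ K | 0 ≤ slack δ π w u t} := fun t =>
    (isClosed_set_pi fun _ _ => isClosed_Icc).isClosed_le continuousOn_const
      ((continuousOn_surplus h0 h1 hπc hwc (t + 1)).sub
        (((continuousOn_comp_apply hπc _).add (continuousOn_comp_apply hwc _)).div_const _))
  have hK : {u | RelaxedFeasible δ π w u} =
      (⋂ t, {u ∈ K | 0 ≤ slack δ π w u t}) ∩ ({u | u 0 = 0} ∩ {u | Monotone u}) := by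
    ext u
    simp only [RelaxedFeasible, K, mem_ofPred_eq, mem_inter_iff, mem_iInter, mem_univ_pi,
      forall_and, forall_const]
    tauto
  rw [hK]
  exact (isCompact_univ_pi fun _ => isCompact_Icc).of_isClosed_subset
    ((isClosed_iInter hslack).inter
      ((isClosed_eq (continuous_apply 0) continuous_const).inter isClosed_monotone))
    fun u hu => (mem_iInter.1 hu.1 0).1

lemma exists_isMaxOn_surplus (h0 : 0 ≤ δ) (h1 : δ < 1) (hπc : ContinuousOn π (Icc 0 1))
    (hwc : ContinuousOn w (Icc 0 1)) :
    ∃ v ∈ {u | RelaxedFeasible δ π w u},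
      IsMaxOn (fun u => surplus δ π w u 0) {u | RelaxedFeasible δ π w u} v :=
  (isCompact_relaxedFeasible h0 h1 hπc hwc).exists_isMaxOn
    ⟨0, fun _ => ⟨le_rfl, zero_le_one⟩, rfl, monotone_const, fun t =>
      ((slack_eq_zero_iff_BE h0 h1 hπc hwc fun _ => ⟨le_rfl, zero_le_one⟩).2
        (fun _ _ => by simp) t).ge⟩
    ((continuousOn_surplus h0 h1 hπc hwc 0).mono fun _ hu n _ => hu.1 n)

end Existence

section Improvement

variable {δ : ℝ} {π w : ℝ → ℝ} {u : ℕ → ℝ}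

lemma surplus_update_of_le (h0 : 0 ≤ δ) (h1 : δ < 1) (hπc : ContinuousOn π (Icc 0 1))
    (hwc : ContinuousOn w (Icc 0 1)) (hu : ∀ n, u n ∈ Icc (0 : ℝ) 1) {j t : ℕ} {x : ℝ}
    (hx : x ∈ Icc (0 : ℝ) 1) (htj : t ≤ j) :
    surplus δ π w (Function.update u j x) t =
      surplus δ π w u t + δ ^ (j - t) * (π x + w x - (π (u j) + w (u j))) := by
  have hux : ∀ n, Function.update u j x n ∈ Icc (0 : ℝ) 1 :=
    (Function.forall_update_iff u fun _ y => y ∈ Icc (0 : ℝ) 1).2 ⟨hx, fun n _ => hu n⟩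
  have := tsum_sub_tsum_of_eq_off (summable_pow_mul_comp h0 h1 (hπc.add hwc) hux t)
    (summable_pow_mul_comp h0 h1 (hπc.add hwc) hu t) (i := j - t)
    fun k hk => by rw [Function.update_of_ne (by omega)]
  rw [show t + (j - t) = j by omega, Function.update_self] at this
  simp only [Pi.add_apply] at this
  rw [surplus, surplus]
  linear_combination this

lemma surplus_update_of_lt {j t : ℕ} {x : ℝ} (hjt : j < t) :
    surplus δ π w (Function.update u j x) t = surplus δ π w u t :=
  tsum_congr fun k => by rw [Function.update_of_ne (by omega)]

lemma exists_BE_gap_of_slack_pos (h0 : 0 ≤ δ) (h1 : δ < 1) (hπc : ContinuousOn π (Icc 0 1))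
    (hwc : ContinuousOn w (Icc 0 1)) (hu : ∀ n, u n ∈ Icc (0 : ℝ) 1) {t : ℕ}
    (ht : 0 < slack δ π w u t) :
    ∃ m, w (u m) - w (u (m + 1)) < δ * (π (u (m + 2)) - π (u (m + 1))) := by
  by_contra! hno
  obtain ⟨C, hC⟩ := exists_abs_slack_le h0 h1 hπc hwc hu
  refine ht.not_ge (nonpos_of_le_mul_succ h0 h1 (fun n => (le_abs_self _).trans (hC n))
    (fun m => ?_) t)
  have := slack_sub_mul_slack_succ h0 h1 hπc hwc hu m
  have : (δ * (π (u (m + 2)) - π (u (m + 1))) - (w (u m) - w (u (m + 1)))) / (1 - δ) ≤ 0 :=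
    div_nonpos_of_nonpos_of_nonneg (by linarith [hno m]) (sub_pos.2 h1).le
  linarith

lemma RelaxedFeasible.update (h0 : 0 ≤ δ) (h1 : δ < 1) (hπc : ContinuousOn π (Icc 0 1))
    (hwc : ContinuousOn w (Icc 0 1)) (hwa : StrictAntiOn w (Icc 0 1))
    (hGm : StrictMonoOn (fun x => π x + w x) (Icc 0 1)) (hu : RelaxedFeasible δ π w u)
    {m : ℕ} {x : ℝ} (hx : x ∈ Ioc (u (m + 1)) (u (m + 2)))
    (hcost : w (u (m + 1)) - w x + δ / (1 - δ) * (π x - π (u (m + 1))) ≤ slack δ π w u m) :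
    RelaxedFeasible δ π w (Function.update u (m + 1) x) := by
  obtain ⟨hI, hu0, hmono, hslack⟩ := hu
  have hD : 1 - δ ≠ 0 := (sub_pos.2 h1).ne'
  have hxI : x ∈ Icc (0 : ℝ) 1 := ⟨(hI _).1.trans hx.1.le, hx.2.trans (hI _).2⟩
  have hG : 0 ≤ π x + w x - (π (u (m + 1)) + w (u (m + 1))) :=
    sub_nonneg.2 (hGm (hI _) hxI hx.1).le
  refine ⟨(Function.forall_update_iff u fun _ y => y ∈ Icc (0 : ℝ) 1).2 ⟨hxI, fun n _ => hI n⟩,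
    by rw [Function.update_of_ne (by omega), hu0],
    hmono.update_succ ((hmono m.le_succ).trans hx.1.le) hx.2, fun t => ?_⟩
  rcases lt_trichotomy t m with ht | rfl | ht
  · rw [slack, surplus_update_of_le h0 h1 hπc hwc hI hxI (by omega),
      Function.update_of_ne (by omega), Function.update_of_ne (by omega)]
    have := hslack t
    rw [slack] at this
    nlinarith [pow_nonneg h0 (m + 1 - (t + 1))]
  · rw [slack, surplus_update_of_le h0 h1 hπc hwc hI hxI le_rfl, Function.update_self,
      Function.update_of_ne (by omega), Nat.sub_self, pow_zero, one_mul]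
    have : surplus δ π w u (t + 1) + (π x + w x - (π (u (t + 1)) + w (u (t + 1)))) -
        (π x + w (u t)) / (1 - δ) = slack δ π w u t -
          (w (u (t + 1)) - w x + δ / (1 - δ) * (π x - π (u (t + 1)))) := by
      rw [slack]
      field_simp
      ring
    linarith
  · rcases (Nat.succ_le_of_lt ht).eq_or_lt with rfl | ht'
    · rw [slack, surplus_update_of_lt (by omega), Function.update_of_ne (by omega),
        Function.update_self]
      have := hslack (m + 1)
      have hwx : w x ≤ w (u (m + 1)) := (hwa (hI _) hxI hx.1).le
      rw [slack] at this
      have : (π (u (m + 1 + 1)) + w x) / (1 - δ) ≤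
          (π (u (m + 1 + 1)) + w (u (m + 1))) / (1 - δ) :=
        div_le_div_of_nonneg_right (by linarith) (sub_pos.2 h1).le
      linarith
    · rw [slack, surplus_update_of_lt (by omega), Function.update_of_ne (by omega),
        Function.update_of_ne (by omega)]
      exact hslack t

lemma exists_surplus_gt_of_BE_gap (h0 : 0 < δ) (h1 : δ < 1) (hπc : ContinuousOn π (Icc 0 1))
    (hwc : ContinuousOn w (Icc 0 1)) (hπm : StrictMonoOn π (Icc 0 1))
    (hwa : StrictAntiOn w (Icc 0 1)) (hGm : StrictMonoOn (fun x => π x + w x) (Icc 0 1))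
    (hu : RelaxedFeasible δ π w u) {m : ℕ}
    (hm : w (u m) - w (u (m + 1)) < δ * (π (u (m + 2)) - π (u (m + 1)))) :
    ∃ v, RelaxedFeasible δ π w v ∧ surplus δ π w u 0 < surplus δ π w v 0 := by
  have hI := hu.1
  have hD := sub_pos.2 h1
  have hw : w (u (m + 1)) ≤ w (u m) := hwa.antitoneOn (hI _) (hI _) (hu.2.2.1 m.le_succ)
  have hlt : u (m + 1) < u (m + 2) := (hπm.lt_iff_lt (hI _) (hI _)).1
    (sub_pos.1 (pos_of_mul_pos_right (by linarith) h0.le))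
  have hslack : 0 < slack δ π w u m := by
    have := slack_sub_mul_slack_succ h0.le h1 hπc hwc hI m
    have := div_pos (sub_pos.2 hm) hD
    nlinarith [mul_nonneg h0.le (hu.2.2.2 (m + 1))]
  -- the loss in slack at `m` when `u (m + 1)` is raised to `x`
  have hcost : ContinuousWithinAt
      (fun x => w (u (m + 1)) - w x + δ / (1 - δ) * (π x - π (u (m + 1))))
      (Ioc (u (m + 1)) (u (m + 2))) (u (m + 1)) :=
    (((continuousOn_const.sub hwc).add (continuousOn_const.mul (hπc.sub continuousOn_const)))
      _ (hI _)).mono fun y hy => ⟨(hI _).1.trans hy.1.le, hy.2.trans (hI _).2⟩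
  obtain ⟨x, hx, hxcost⟩ :=
    exists_mem_Ioc_lt_of_continuousWithinAt hlt hcost (by simpa using hslack)
  have hxI : x ∈ Icc (0 : ℝ) 1 := ⟨(hI _).1.trans hx.1.le, hx.2.trans (hI _).2⟩
  refine ⟨_, hu.update h0.le h1 hπc hwc hwa hGm hx hxcost.le, ?_⟩
  rw [surplus_update_of_le h0.le h1 hπc hwc hI hxI (Nat.zero_le _)]
  have := mul_pos (pow_pos h0 (m + 1 - 0)) (sub_pos.2 (hGm (hI _) hxI hx.1))
  linarith

lemma slack_eq_zero_of_isMaxOn {v : ℕ → ℝ} (h0 : 0 < δ) (h1 : δ < 1)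
    (hπc : ContinuousOn π (Icc 0 1)) (hwc : ContinuousOn w (Icc 0 1))
    (hπm : StrictMonoOn π (Icc 0 1)) (hwa : StrictAntiOn w (Icc 0 1))
    (hGm : StrictMonoOn (fun x => π x + w x) (Icc 0 1)) (hv : RelaxedFeasible δ π w v)
    (hmax : IsMaxOn (fun u => surplus δ π w u 0) {u | RelaxedFeasible δ π w u} v) (t : ℕ) :
    slack δ π w v t = 0 := by
  refine le_antisymm (not_lt.1 fun ht => ?_) (hv.2.2.2 t)
  obtain ⟨m, hm⟩ := exists_BE_gap_of_slack_pos h0.le h1 hπc hwc hv.1 ht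
  obtain ⟨v', hv', hlt⟩ := exists_surplus_gt_of_BE_gap h0 h1 hπc hwc hπm hwa hGm hv hm
  exact (hmax hv').not_gt hlt

end Improvement

section Optimality

variable {δ : ℝ} {π w : ℝ → ℝ} {v s p : ℕ → ℝ}

lemma implementable_payStar_of_BE (h0 : 0 < δ) (h1 : δ < 1) (hπc : ContinuousOn π (Icc 0 1))
    (hwc : ContinuousOn w (Icc 0 1)) (hπm : StrictMonoOn π (Icc 0 1))
    (hwa : StrictAntiOn w (Icc 0 1)) (hs : ∀ n, s n ∈ Icc (0 : ℝ) 1) (hs0 : s 0 = 0)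
    (h : BE δ π w s) : Implementable δ π w s (payStar δ w s) :=
  (RelaxedFeasible.of_BE h0 h1 hπc hwc hπm hwa hs hs0 h).implementable_payStar h0 h1 hπc hwc hπm hwa

lemma PiVal_le_of_isMaxOn (h0 : 0 < δ) (h1 : δ < 1)
    (hπc : ContinuousOn π (Icc 0 1)) (hwc : ContinuousOn w (Icc 0 1))
    (hv : RelaxedFeasible δ π w v)
    (hmax : IsMaxOn (fun u => surplus δ π w u 0) {u | RelaxedFeasible δ π w u} v)
    (h : Implementable δ π w s p) :
    PiVal δ π s p 0 ≤ PiVal δ π v (payStar δ w v) 0 := by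
  rw [PiVal_payStar_zero h0 h1 hπc hwc hv.1, hv.2.1, ← h.1.2.1]
  exact (h.PiVal_le h0 h1 hπc hwc).trans
    (sub_le_sub_right (hmax (h.relaxedFeasible h0 h1 hπc hwc)) _)

lemma Optimal.isMaxOn_surplus (h0 : 0 < δ) (h1 : δ < 1) (hπc : ContinuousOn π (Icc 0 1))
    (hwc : ContinuousOn w (Icc 0 1)) (hπm : StrictMonoOn π (Icc 0 1))
    (hwa : StrictAntiOn w (Icc 0 1)) (hv : RelaxedFeasible δ π w v)
    (hmax : IsMaxOn (fun u => surplus δ π w u 0) {u | RelaxedFeasible δ π w u} v)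
    (h : Optimal δ π w s p) :
    IsMaxOn (fun u => surplus δ π w u 0) {u | RelaxedFeasible δ π w u} s ∧
      PiVal δ π s p 0 = surplus δ π w s 0 - w (s 0) / (1 - δ) := by
  have hle := h.1.PiVal_le h0 h1 hπc hwc
  have hv_le := h.2 v _ (hv.implementable_payStar h0 h1 hπc hwc hπm hwa)
  rw [PiVal_payStar_zero h0 h1 hπc hwc hv.1, hv.2.1, ← h.1.1.2.1] at hv_le
  have hS : surplus δ π w s 0 ≤ surplus δ π w v 0 := hmax (h.1.relaxedFeasible h0 h1 hπc hwc)
  exact ⟨fun u hu => (hmax hu).trans (show surplus δ π w v 0 ≤ surplus δ π w s 0 by linarith),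
    by linarith⟩

end Optimality

/-- Program equivalence: a contract is optimal iff p = p*(s), s satisfies (BE),
and s_1 is maximal among nondecreasing [0,1]-valued sequences with s'_0 = 0 satisfying (BE). -/
theorem optimal_iff_program
    (δ : ℝ) (hδ : δ ∈ Set.Ioo (0 : ℝ) 1) (π w : ℝ → ℝ)
    (hπc : ContinuousOn π (Set.Icc 0 1)) (hwc : ContinuousOn w (Set.Icc 0 1))
    (hπm : StrictMonoOn π (Set.Icc 0 1)) (hwa : StrictAntiOn w (Set.Icc 0 1))
    (hGm : StrictMonoOn (fun x => π x + w x) (Set.Icc 0 1))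
    (s p : ℕ → ℝ) (hc : IsContract δ s p) :
    Optimal δ π w s p ↔
      ((∀ t, p t = payStar δ w s t) ∧ BE δ π w s ∧
        ∀ s' : ℕ → ℝ, (∀ t, s' t ∈ Set.Icc (0 : ℝ) 1) → s' 0 = 0 → Monotone s' →
          BE δ π w s' → s' 1 ≤ s 1) := by
  obtain ⟨h0, h1⟩ := hδ
  obtain ⟨hs, hs0, -⟩ := hc
  obtain ⟨v, hv, hvmax⟩ := exists_isMaxOn_surplus h0.le h1 hπc hwc
  have hv_BE := (slack_eq_zero_iff_BE h0.le h1 hπc hwc hv.1).1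
    (slack_eq_zero_of_isMaxOn h0 h1 hπc hwc hπm hwa hGm hv hvmax)
  constructor
  · intro hopt
    obtain ⟨hs_max, hPi⟩ := hopt.isMaxOn_surplus h0 h1 hπc hwc hπm hwa hv hvmax
    have hslack := slack_eq_zero_of_isMaxOn h0 h1 hπc hwc hπm hwa hGm
      (hopt.1.relaxedFeasible h0 h1 hπc hwc) hs_max
    have hs_BE := (slack_eq_zero_iff_BE h0.le h1 hπc hwc hs).1 hslack
    obtain rfl := eq_payStar_of_slack_eq_zero h0 h1 hπc hwc hopt.1 hslack hPi
    refine ⟨fun _ => rfl, hs_BE, fun s' hs' hs'0 _ hs'_BE => ?_⟩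
    exact (PiVal_payStar_le_iff h0 h1 hπc hwc hπm hs' hs hs'_BE hs_BE (hs'0.trans hs0.symm)).1
      (hopt.2 s' _ (implementable_payStar_of_BE h0 h1 hπc hwc hπm hwa hs' hs'0 hs'_BE))
  · rintro ⟨hp, hs_BE, hs_max⟩
    obtain rfl : p = payStar δ w s := funext hp
    refine ⟨implementable_payStar_of_BE h0 h1 hπc hwc hπm hwa hs hs0 hs_BE, fun s' p' h' => ?_⟩
    exact (PiVal_le_of_isMaxOn h0 h1 hπc hwc hv hvmax h').trans
      ((PiVal_payStar_le_iff h0 h1 hπc hwc hπm hv.1 hs hv_BE hs_BE (hv.2.1.trans hs0.symm)).2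
        (hs_max v hv.1 hv.2.1 hv.2.2.1 hv_BE))
end

section
/- Trivial case of the optimal contract: if the smallest maximizer s̄* of s ↦ δ·π(s) + w(s) on [0,1] equals 0, then the trivial contract is optimal. -/
open Set Filter

/-- The set of maximizers of `x ↦ δ·π(x) + w(x)` on `[0,1]`. -/
def MaxSet (δ : ℝ) (π w : ℝ → ℝ) : Set ℝ :=
  {x | x ∈ Set.Icc (0 : ℝ) 1 ∧ ∀ y ∈ Set.Icc (0 : ℝ) 1, δ * π y + w y ≤ δ * π x + w x}

/-!
Write `e t = π(s t) − π 0` and `q t = G(s t) − G 0` with `G = π + w`. Adding (P-IC) at `t + 1`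
to (E-IC) at `t` bounds `e (t+1) − e t + q t` by `(1 − δ) Q (t+1)`, where `Q` is the discounted
tail of `q`; since `Q t = q t + δ Q (t+1)`, this says that `Q − e` is nondecreasing, so
`e t ≤ Q t − Q 0`. Because `0` maximizes `δπ + w`, `q ≤ (1 − δ) e`, hence `Q t ≤ sup e`, and
taking the supremum over `t` forces `Q 0 ≤ 0`. So `q ≡ 0`, `e ≤ 0`, and the principal never
earns more than `π 0` per period.
-/

noncomputable def discountedTail (δ : ℝ) (x : ℕ → ℝ) (t : ℕ) : ℝ :=
  ∑' k : ℕ, δ ^ k * x (t + k)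

section Discounting

variable {δ : ℝ} {x : ℕ → ℝ} {t : ℕ}

lemma summable_discounted_of_abs_le (hδ₀ : 0 ≤ δ) (hδ₁ : δ < 1) {C : ℝ}
    (hx : ∀ k, |x k| ≤ C) : Summable fun k => δ ^ k * x k :=
  Summable.of_norm_bounded ((summable_geometric_of_lt_one hδ₀ hδ₁).mul_right C) fun k => by
    rw [Real.norm_eq_abs, abs_mul, abs_pow, abs_of_nonneg hδ₀]
    exact mul_le_mul_of_nonneg_left (hx k) (pow_nonneg hδ₀ k)

lemma summable_discounted_shift (hδ : δ ≠ 0) (hx : Summable fun k => δ ^ k * x k) (t : ℕ) :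
    Summable fun k => δ ^ k * x (t + k) := by
  refine (((summable_nat_add_iff t).mpr hx).mul_left (δ ^ t)⁻¹).congr fun k => ?_
  rw [add_comm k t, pow_add, mul_assoc, inv_mul_cancel_left₀ (pow_ne_zero t hδ)]

lemma discountedTail_const (hδ₀ : 0 ≤ δ) (hδ₁ : δ < 1) (c : ℝ) (t : ℕ) :
    discountedTail δ (fun _ => c) t = c / (1 - δ) := by
  rw [discountedTail, tsum_mul_right, tsum_geometric_of_lt_one hδ₀ hδ₁, div_eq_inv_mul]

lemma discountedTail_sub_const (hδ₀ : 0 ≤ δ) (hδ₁ : δ < 1)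
    (hx : Summable fun k => δ ^ k * x (t + k)) (c : ℝ) :
    discountedTail δ (fun τ => x τ - c) t = discountedTail δ x t - c / (1 - δ) := by
  rw [← discountedTail_const hδ₀ hδ₁ c t, discountedTail, discountedTail, discountedTail,
    ← hx.tsum_sub ((summable_geometric_of_lt_one hδ₀ hδ₁).mul_right c)]
  simp only [mul_sub]

lemma discountedTail_eq_add_mul_succ (hx : Summable fun k => δ ^ k * x (t + k)) :
    discountedTail δ x t = x t + δ * discountedTail δ x (t + 1) := by
  rw [discountedTail, hx.tsum_eq_zero_add, discountedTail, ← tsum_mul_left]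
  simp only [pow_zero, one_mul, add_zero]
  congr 1
  refine tsum_congr fun k => ?_
  rw [show t + (k + 1) = t + 1 + k by omega, pow_succ]
  ring

lemma discountedTail_le_of_le (hδ₀ : 0 ≤ δ) (hδ₁ : δ < 1)
    (hx : Summable fun k => δ ^ k * x (t + k)) {c : ℝ} (hxc : ∀ τ, x τ ≤ c) :
    discountedTail δ x t ≤ c / (1 - δ) := by
  rw [← discountedTail_const hδ₀ hδ₁ c t]
  exact hx.tsum_le_tsum (fun k => mul_le_mul_of_nonneg_left (hxc _) (pow_nonneg hδ₀ k))
    ((summable_geometric_of_lt_one hδ₀ hδ₁).mul_right c)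

lemma eq_zero_of_discountedTail_nonpos (hδ : 0 < δ) (hx₀ : ∀ τ, 0 ≤ x τ)
    (hx : Summable fun k => δ ^ k * x k) (h : discountedTail δ x 0 ≤ 0) (τ : ℕ) : x τ = 0 := by
  have hnn : ∀ k, 0 ≤ δ ^ k * x k := fun k => mul_nonneg (pow_nonneg hδ.le k) (hx₀ k)
  have hsum : ∑' k, δ ^ k * x k = 0 :=
    le_antisymm (by simpa [discountedTail] using h) (tsum_nonneg hnn)
  have hzero := (hasSum_zero_iff_of_nonneg hnn).1 (hsum ▸ hx.hasSum)
  exact (mul_eq_zero.1 (congrFun hzero τ)).resolve_left (pow_ne_zero τ hδ.ne')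

theorem nonpos_of_step_le_discountedTail (hδ₀ : 0 < δ) (hδ₁ : δ < 1) {e q : ℕ → ℝ} {C : ℝ}
    (he₀ : e 0 ≤ 0) (heC : ∀ t, e t ≤ C) (hq₀ : ∀ t, 0 ≤ q t)
    (hqe : ∀ t, q t ≤ (1 - δ) * e t)
    (hstep : ∀ t, e (t + 1) - e t + q t ≤ (1 - δ) * discountedTail δ q (t + 1)) (t : ℕ) :
    e t ≤ 0 := by
  have h1δ : 0 < 1 - δ := sub_pos.2 hδ₁
  have hqC : ∀ t, q t ≤ (1 - δ) * C :=
    fun t => (hqe t).trans (mul_le_mul_of_nonneg_left (heC t) h1δ.le)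
  have hq : ∀ t, Summable fun k => δ ^ k * q (t + k) := fun t =>
    summable_discounted_of_abs_le hδ₀.le hδ₁
      fun k => abs_le.2 ⟨by linarith [hq₀ (t + k), hqC (t + k)], hqC (t + k)⟩
  have hmono : Monotone fun t => discountedTail δ q t - e t :=
    monotone_nat_of_le_succ fun t => by
      linarith [discountedTail_eq_add_mul_succ (hq t), hstep t]
  have heQ : ∀ t, e t ≤ discountedTail δ q t - discountedTail δ q 0 :=
    fun t => by linarith [hmono (Nat.zero_le t)]
  have hbdd : BddAbove (range e) := ⟨C, forall_mem_range.2 heC⟩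
  have hQE : ∀ t, discountedTail δ q t ≤ ⨆ t, e t := fun t => by
    have := discountedTail_le_of_le hδ₀.le hδ₁ (hq t)
      fun τ => (hqe τ).trans (mul_le_mul_of_nonneg_left (le_ciSup hbdd τ) h1δ.le)
    rwa [mul_div_cancel_left₀ _ h1δ.ne'] at this
  have hQ₀ : discountedTail δ q 0 ≤ 0 := by
    have : ⨆ t, e t ≤ (⨆ t, e t) - discountedTail δ q 0 :=
      ciSup_le fun t => (heQ t).trans (by linarith [hQE t])
    linarith
  have hq0 := eq_zero_of_discountedTail_nonpos hδ₀ hq₀ (by simpa using hq 0) hQ₀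
  have hQ : ∀ t, discountedTail δ q t = 0 := fun t => by simp [discountedTail, hq0]
  linarith [heQ t, hQ t, hQ 0]

end Discounting

section Contracts

variable {δ : ℝ} {π w f : ℝ → ℝ} {s p : ℕ → ℝ}

lemma PiVal_trivial (hδ₀ : 0 ≤ δ) (hδ₁ : δ < 1) (t : ℕ) :
    PiVal δ π (fun _ => 0) (fun _ => 0) t = π 0 / (1 - δ) := by
  rw [← sub_zero (π 0), ← discountedTail_const hδ₀ hδ₁ _ t]
  rfl

lemma WVal_trivial (hδ₀ : 0 ≤ δ) (hδ₁ : δ < 1) (t : ℕ) :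
    WVal δ w (fun _ => 0) (fun _ => 0) t = w 0 / (1 - δ) := by
  rw [← add_zero (w 0), ← discountedTail_const hδ₀ hδ₁ _ t]
  rfl

lemma implementable_trivial (hδ₀ : 0 ≤ δ) (hδ₁ : δ < 1) :
    Implementable δ π w (fun _ => 0) (fun _ => 0) :=
  ⟨⟨fun _ => ⟨le_rfl, zero_le_one⟩, rfl, by simp⟩, monotone_const, fun _ => le_rfl,
    fun t => (PiVal_trivial hδ₀ hδ₁ t).ge, fun t => (WVal_trivial hδ₀ hδ₁ (t + 1)).ge⟩

lemma PiVal_add_WVal_s7 {t : ℕ}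
    (hπ : Summable fun k => δ ^ k * (π (s (t + k)) - p (t + k)))
    (hw : Summable fun k => δ ^ k * (w (s (t + k)) + p (t + k))) :
    PiVal δ π s p t + WVal δ w s p t = discountedTail δ (fun τ => π (s τ) + w (s τ)) t := by
  rw [PiVal, WVal, ← hπ.tsum_add hw]
  exact tsum_congr fun k => by ring

lemma summable_discounted_comp_of_monotoneOn (hδ₀ : 0 ≤ δ) (hδ₁ : δ < 1)
    (hs : ∀ t, s t ∈ Icc 0 1) (hf : MonotoneOn f (Icc 0 1)) (t : ℕ) :
    Summable fun k => δ ^ k * f (s (t + k)) :=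
  summable_discounted_of_abs_le hδ₀ hδ₁ fun k =>
    have hst := hs (t + k)
    abs_le_max_abs_abs (hf ⟨le_rfl, zero_le_one⟩ hst hst.1) (hf hst ⟨zero_le_one, le_rfl⟩ hst.2)

lemma IsContract.summable_sub_payment_tail (hδ₀ : 0 < δ) (hδ₁ : δ < 1) (h : IsContract δ s p)
    (hf : MonotoneOn f (Icc 0 1)) (t : ℕ) :
    Summable fun k => δ ^ k * (f (s (t + k)) - p (t + k)) :=
  ((summable_discounted_comp_of_monotoneOn hδ₀.le hδ₁ h.1 hf t).sub
    (summable_discounted_shift hδ₀.ne' h.2.2 t)).congr fun _ => (mul_sub _ _ _).symm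

theorem Implementable.le_of_zero_mem_maxSet (hδ₀ : 0 < δ) (hδ₁ : δ < 1)
    (hπ : MonotoneOn π (Icc 0 1)) (hG : MonotoneOn (fun x => π x + w x) (Icc 0 1))
    (h0 : 0 ∈ MaxSet δ π w) (h : Implementable δ π w s p) (t : ℕ) : π (s t) ≤ π 0 := by
  obtain ⟨hc, -, -, hP, hE⟩ := h
  have h1δ : 0 < 1 - δ := sub_pos.2 hδ₁
  have hstep : ∀ t, π (s (t + 1)) + w (s t) - (π 0 + w 0) ≤ (1 - δ) *
      discountedTail δ (fun τ => π (s τ) + w (s τ) - (π 0 + w 0)) (t + 1) := fun t => by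
    have hGs := summable_discounted_comp_of_monotoneOn hδ₀.le hδ₁ hc.1 hG (t + 1)
    have hπp := hc.summable_sub_payment_tail hδ₀ hδ₁ hπ (t + 1)
    have hIC := add_le_add (hP (t + 1)) (hE t)
    have hwp : Summable fun k => δ ^ k * (w (s (t + 1 + k)) + p (t + 1 + k)) :=
      (hGs.sub hπp).congr fun k => by ring
    rw [PiVal_add_WVal_s7 hπp hwp, ← add_div, div_le_iff₀ h1δ] at hIC
    rw [discountedTail_sub_const (x := fun τ => π (s τ) + w (s τ)) hδ₀.le hδ₁ hGs, mul_sub,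
      mul_div_cancel₀ _ h1δ.ne']
    linarith
  refine sub_nonpos.1 (nonpos_of_step_le_discountedTail hδ₀ hδ₁ (C := π 1 - π 0)
    (e := fun t => π (s t) - π 0) (q := fun t => π (s t) + w (s t) - (π 0 + w 0))
    (by simp [hc.2.1]) (fun t => ?_) (fun t => ?_) (fun t => ?_) (fun t => ?_) t)
  · have hs := hc.1 t
    linarith [hπ hs ⟨zero_le_one, le_rfl⟩ hs.2]
  · have hs := hc.1 t
    linarith [hG ⟨le_rfl, zero_le_one⟩ hs hs.1]
  · linarith [h0.2 (s t) (hc.1 t)]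
  · linarith [hstep t]

end Contracts

theorem trivial_optimal_of_sbar_zero_general
    (δ : ℝ) (hδ : δ ∈ Set.Ioo (0 : ℝ) 1) (π w : ℝ → ℝ)
    (hπm : StrictMonoOn π (Set.Icc 0 1))
    (hGm : StrictMonoOn (fun x => π x + w x) (Set.Icc 0 1))
    (hmax : IsLeast (MaxSet δ π w) 0) :
    Optimal δ π w (fun _ => 0) (fun _ => 0) := by
  obtain ⟨hδ₀, hδ₁⟩ := hδ
  refine ⟨implementable_trivial hδ₀.le hδ₁, fun s p h => ?_⟩
  have hprofit : ∀ t, π (s t) - p t ≤ π 0 := fun t => by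
    linarith [h.le_of_zero_mem_maxSet hδ₀ hδ₁ hπm.monotoneOn hGm.monotoneOn hmax.1 t, h.2.2.1 t]
  have hsum := h.1.summable_sub_payment_tail hδ₀ hδ₁ hπm.monotoneOn 0
  calc PiVal δ π s p 0 = discountedTail δ (fun τ => π (s τ) - p τ) 0 := rfl
    _ ≤ π 0 / (1 - δ) :=
        discountedTail_le_of_le (x := fun τ => π (s τ) - p τ) hδ₀.le hδ₁ hsum hprofit
    _ = PiVal δ π (fun _ => 0) (fun _ => 0) 0 := (PiVal_trivial hδ₀.le hδ₁ 0).symm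

/-- If the smallest maximizer of x ↦ δ·π(x) + w(x) on [0,1] is 0,
then the trivial contract is optimal. -/
theorem trivial_optimal_of_sbar_zero
    (δ : ℝ) (hδ : δ ∈ Set.Ioo (0 : ℝ) 1) (π w : ℝ → ℝ)
    (hπc : ContinuousOn π (Set.Icc 0 1)) (hwc : ContinuousOn w (Set.Icc 0 1))
    (hπm : StrictMonoOn π (Set.Icc 0 1)) (hwa : StrictAntiOn w (Set.Icc 0 1))
    (hGm : StrictMonoOn (fun x => π x + w x) (Set.Icc 0 1))
    (hmax : IsLeast (MaxSet δ π w) 0) :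
    Optimal δ π w (fun _ => 0) (fun _ => 0) :=
  trivial_optimal_of_sbar_zero_general δ hδ π w hπm hGm hmax
end
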